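/- arXiv:0707.1744 — 2 statements merged into one kernel-verified Lean document; each statement's English description precedes it below -/
import Mathlib

section
/- (SLLN for the local clustering coefficient, conditional version) Fix x ∈ R with E_D(x) := E[I_B(f_c(x, X_2))] > 0. Define T_n(x) = Σ_{2 ≤ j < k ≤ n} I_B(f_c(x,X_j)) I_B(f_c(X_j,X_k)) I_B(f_c(X_k,x)) and V_n(x) = Σ_{2 ≤ j < k ≤ n} I_B(f_c(x,X_j)) I_B(f_c(x,X_k)). Then almost surely T_n(x)/V_n(x) (defined for large n when V_n(x) ≥ 1) converges to E_T(x)/E_D(x)^2, where E_T(x) = E[I_B(f_c(x,X_2)) I_B(f_c(X_2,X_3)) I_B(f_c(X_3,x))]. -/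
open MeasureTheory ProbabilityTheory Finset Filter
open scoped Classical

/-!
Both `T_n(x)` and `V_n(x)` are U-statistics `S_n = ∑_{j<k<n} h(X_j, X_k)` of order two, with
kernels `h_T(u,v) = 1_B(f_c(x,u)) 1_B(f_c(u,v)) 1_B(f_c(v,x))` and
`h_V(u,v) = 1_B(f_c(x,u)) 1_B(f_c(x,v))`, whose means are `E_T` and, by independence, `E_D²`.
For a kernel with values in `[0, C]`, summands indexed by disjoint pairs are independent and each
pair meets at most `4n` others, so `Var S_n ≤ 4C²n³`. Along `n = m²` the variances of `S_n / n²`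
are therefore summable, which gives almost sure convergence to `E h / 2`; monotonicity of `S_n`
in `n` fills in the gaps between squares. The ratio of the two limits is `E_T / E_D²`.
-/

def increasingPairs (n : ℕ) : Finset (ℕ × ℕ) :=
  (range n ×ˢ range n).filter fun p => p.1 < p.2

lemma mem_increasingPairs {n : ℕ} {p : ℕ × ℕ} :
    p ∈ increasingPairs n ↔ p.1 < p.2 ∧ p.2 < n := by
  simp only [increasingPairs, mem_filter, mem_product, mem_range]
  exact ⟨fun ⟨⟨_, h2⟩, h⟩ => ⟨h, h2⟩, fun ⟨h, h2⟩ => ⟨⟨h.trans h2, h2⟩, h⟩⟩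

lemma increasingPairs_mono : Monotone increasingPairs := fun _ _ hmn _ hp => by
  rw [mem_increasingPairs] at hp ⊢
  exact ⟨hp.1, hp.2.trans_le hmn⟩

lemma sum_range_sum_Ioo_eq_sum_increasingPairs {M : Type*} [AddCommMonoid M] (n : ℕ)
    (f : ℕ → ℕ → M) :
    ∑ j ∈ range n, ∑ k ∈ Ioo j n, f j k = ∑ p ∈ increasingPairs n, f p.1 p.2 := by
  rw [increasingPairs, sum_filter, sum_product]
  refine sum_congr rfl fun j _ => ?_
  rw [← sum_filter]
  congr 1
  ext k
  simp [and_comm]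

lemma card_increasingPairs_mul_two (n : ℕ) : #(increasingPairs n) * 2 = n * (n - 1) := by
  have hcard : #(increasingPairs n) = ∑ j ∈ range n, (n - 1 - j) := by
    rw [card_eq_sum_ones, ← sum_range_sum_Ioo_eq_sum_increasingPairs n fun _ _ => 1]
    refine sum_congr rfl fun j _ => ?_
    rw [← card_eq_sum_ones, Nat.card_Ioo]
    omega
  rw [hcard, sum_range_reflect (fun j => j) n, sum_range_id_mul_two]

lemma card_increasingPairs_le (n : ℕ) : #(increasingPairs n) ≤ n ^ 2 := by
  have := card_increasingPairs_mul_two n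
  nlinarith [Nat.sub_le n 1]

lemma tendsto_card_increasingPairs_div_sq :
    Tendsto (fun n : ℕ => (#(increasingPairs n) : ℝ) / (n : ℝ) ^ 2) atTop (nhds (1 / 2)) := by
  have hlim : Tendsto (fun n : ℕ => (1 - 1 / (n : ℝ)) / 2) atTop (nhds ((1 - 0) / 2)) :=
    (tendsto_const_nhds.sub tendsto_one_div_atTop_nhds_zero_nat).div_const 2
  rw [sub_zero] at hlim
  refine hlim.congr' ?_
  filter_upwards [eventually_ge_atTop 1] with n hn
  have hcard := congrArg (Nat.cast : ℕ → ℝ) (card_increasingPairs_mul_two n)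
  push_cast [Nat.cast_sub hn] at hcard
  have hn0 : (n : ℝ) ≠ 0 := by positivity
  field_simp
  linarith

def SharesIndex (p q : ℕ × ℕ) : Prop :=
  p.1 = q.1 ∨ p.1 = q.2 ∨ p.2 = q.1 ∨ p.2 = q.2

lemma card_filter_sharesIndex_le (n : ℕ) (p : ℕ × ℕ) :
    #((increasingPairs n).filter (SharesIndex p)) ≤ 4 * n := by
  let s : Finset ℕ := {p.1, p.2}
  have hsub : (increasingPairs n).filter (SharesIndex p) ⊆ s ×ˢ range n ∪ range n ×ˢ s := by
    intro q hq
    obtain ⟨hq, hshare⟩ := mem_filter.1 hq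
    obtain ⟨hq12, hq2⟩ := mem_increasingPairs.1 hq
    simp only [mem_union, mem_product, mem_range, s, mem_insert, mem_singleton]
    rcases hshare with h | h | h | h <;> omega
  have hs : #s ≤ 2 := card_le_two
  calc #((increasingPairs n).filter (SharesIndex p))
      ≤ #(s ×ˢ range n) + #(range n ×ˢ s) := (card_le_card hsub).trans (card_union_le _ _)
    _ ≤ 4 * n := by
      rw [card_product, card_product, card_range]
      nlinarith

lemma tendsto_div_sq_of_monotone {f : ℕ → ℝ} (hmono : Monotone f) (hf : ∀ n, 0 ≤ f n) {L : ℝ}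
    (hsq : Tendsto (fun m : ℕ => f (m ^ 2) / (m : ℝ) ^ 4) atTop (nhds L)) :
    Tendsto (fun n : ℕ => f n / (n : ℝ) ^ 2) atTop (nhds L) := by
  have hratio : Tendsto (fun m : ℕ => (m : ℝ) / (m + 1)) atTop (nhds 1) :=
    tendsto_natCast_div_add_atTop 1
  have hlower : Tendsto (fun m : ℕ => f (m ^ 2) / ((m : ℝ) + 1) ^ 4) atTop (nhds L) := by
    have := hsq.mul (hratio.pow 4)
    rw [one_pow, mul_one] at this
    refine this.congr' ?_
    filter_upwards [eventually_ge_atTop 1] with m hm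
    have : (m : ℝ) ≠ 0 := by positivity
    field_simp
  have hupper : Tendsto (fun m : ℕ => f ((m + 1) ^ 2) / (m : ℝ) ^ 4) atTop (nhds L) := by
    have := ((tendsto_add_atTop_iff_nat 1).2 hsq).mul ((hratio.inv₀ one_ne_zero).pow 4)
    rw [inv_one, one_pow, mul_one] at this
    refine this.congr' ?_
    filter_upwards [eventually_ge_atTop 1] with m hm
    have : (m : ℝ) ≠ 0 := by positivity
    push_cast
    field_simp
  have hsqrt : Tendsto Nat.sqrt atTop atTop :=
    tendsto_atTop_atTop.2 fun b => ⟨b * b, fun n hn => Nat.le_sqrt.2 hn⟩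
  refine tendsto_of_tendsto_of_tendsto_of_le_of_le' (hlower.comp hsqrt) (hupper.comp hsqrt) ?_ ?_
  · filter_upwards [eventually_ge_atTop 1] with n hn1
    have hn : (n : ℝ) ^ 2 ≤ ((Nat.sqrt n : ℝ) + 1) ^ 4 := by
      have : (n : ℝ) ≤ ((Nat.sqrt n : ℝ) + 1) ^ 2 := by exact_mod_cast (Nat.lt_succ_sqrt' n).le
      nlinarith
    exact div_le_div₀ (hf n) (hmono (Nat.sqrt_le' n)) (by positivity) hn
  · filter_upwards [eventually_ge_atTop 1] with n hn1
    have hn : (Nat.sqrt n : ℝ) ^ 4 ≤ (n : ℝ) ^ 2 := by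
      have : (Nat.sqrt n : ℝ) ^ 2 ≤ n := by exact_mod_cast Nat.sqrt_le' n
      nlinarith [sq_nonneg (Nat.sqrt n : ℝ)]
    have : 0 < Nat.sqrt n := Nat.sqrt_pos.2 hn1
    exact div_le_div₀ (hf _) (hmono (Nat.lt_succ_sqrt' n).le) (by positivity) hn

def pairSum {Ω : Type*} (h : ℝ → ℝ → ℝ) (X : ℕ → Ω → ℝ) (n : ℕ) (ω : Ω) : ℝ :=
  ∑ p ∈ increasingPairs n, h (X p.1 ω) (X p.2 ω)

section

variable {Ω : Type*} {X : ℕ → Ω → ℝ} {h : ℝ → ℝ → ℝ}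

lemma pairSum_mono (h0 : ∀ u v, 0 ≤ h u v) (ω : Ω) : Monotone fun n => pairSum h X n ω :=
  fun _ _ hmn => sum_le_sum_of_subset_of_nonneg (increasingPairs_mono hmn) fun _ _ _ => h0 _ _

lemma pairSum_nonneg (h0 : ∀ u v, 0 ≤ h u v) (n : ℕ) (ω : Ω) : 0 ≤ pairSum h X n ω :=
  sum_nonneg fun _ _ => h0 _ _

end

section

variable {Ω : Type*} [MeasurableSpace Ω] {P : Measure Ω} [IsProbabilityMeasure P]

lemma covariance_le_sq_of_bounded {U V : Ω → ℝ} {C : ℝ} (hU : AEStronglyMeasurable U P)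
    (hV : AEStronglyMeasurable V P) (hU0 : ∀ ω, 0 ≤ U ω) (hUC : ∀ ω, U ω ≤ C)
    (hV0 : ∀ ω, 0 ≤ V ω) (hVC : ∀ ω, V ω ≤ C) :
    cov[U, V; P] ≤ C ^ 2 := by
  have hbound {W : Ω → ℝ} (hW0 : ∀ ω, 0 ≤ W ω) (hWC : ∀ ω, W ω ≤ C) :
      ∀ᵐ ω ∂P, ‖W ω‖ ≤ C :=
    ae_of_all _ fun ω => by rw [Real.norm_of_nonneg (hW0 ω)]; exact hWC ω
  rw [covariance_eq_sub (.of_bound hU C (hbound hU0 hUC)) (.of_bound hV C (hbound hV0 hVC))]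
  have hprod : P[U * V] ≤ C ^ 2 := by
    have := integral_mono_of_nonneg (μ := P) (f := U * V) (g := fun _ => C ^ 2)
      (ae_of_all _ fun ω => mul_nonneg (hU0 ω) (hV0 ω)) (integrable_const _)
      (ae_of_all _ fun ω => by
        simpa [sq] using mul_le_mul (hUC ω) (hVC ω) (hV0 ω) ((hU0 ω).trans (hUC ω)))
    simpa using this
  have hmean : 0 ≤ P[U] * P[V] := mul_nonneg (integral_nonneg hU0) (integral_nonneg hV0)
  linarith

lemma ae_tendsto_sub_integral_of_summable_variance {Z : ℕ → Ω → ℝ}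
    (hZ : ∀ m, MemLp (Z m) 2 P) (hsum : Summable fun m => Var[Z m; P]) :
    ∀ᵐ ω ∂P, Tendsto (fun m => Z m ω - P[Z m]) atTop (nhds 0) := by
  have hmeas (m : ℕ) : AEMeasurable (fun ω => ‖Z m ω - P[Z m]‖ₑ ^ 2) P :=
    ((hZ m).aemeasurable.sub_const _).enorm.pow_const 2
  have hlint : ∫⁻ ω, ∑' m, ‖Z m ω - P[Z m]‖ₑ ^ 2 ∂P ≠ ⊤ := by
    have hvar (m : ℕ) : ∫⁻ ω, ‖Z m ω - P[Z m]‖ₑ ^ 2 ∂P = ENNReal.ofReal Var[Z m; P] :=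
      (ofReal_variance (hZ m)).symm
    rw [lintegral_tsum fun m => hmeas m, tsum_congr hvar,
      ← ENNReal.ofReal_tsum_of_nonneg (fun m => variance_nonneg _ _) hsum]
    exact ENNReal.ofReal_ne_top
  filter_upwards [ae_lt_top' (AEMeasurable.tsum hmeas) hlint] with ω hω
  have hsq := (ENNReal.tendsto_toReal ENNReal.zero_ne_top).comp
    (ENNReal.tendsto_atTop_zero_of_tsum_ne_top hω.ne)
  rw [tendsto_zero_iff_norm_tendsto_zero]
  simpa [Function.comp_def, Real.sqrt_sq_eq_abs] using hsq.sqrt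


end

section

variable {Ω : Type*} [MeasurableSpace Ω] {P : Measure Ω} {X : ℕ → Ω → ℝ}
  (hXmeas : ∀ i, Measurable (X i)) (hindep : iIndepFun X P)
  (hident : ∀ i j, IdentDistrib (X i) (X j) P P)

include hXmeas hindep hident in
lemma integral_mul_comp_pair_eq_sq {g : ℝ → ℝ} (hg : Measurable g) :
    ∫ ω, g (X 0 ω) * g (X 1 ω) ∂P = (∫ ω, g (X 0 ω) ∂P) ^ 2 := by
  have hindep01 : IndepFun (fun ω => g (X 0 ω)) (fun ω => g (X 1 ω)) P :=
    (hindep.indepFun zero_ne_one).comp hg hg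
  have hident10 : ∫ ω, g (X 1 ω) ∂P = ∫ ω, g (X 0 ω) ∂P := ((hident 1 0).comp hg).integral_eq
  rw [hindep01.integral_fun_mul_eq_mul_integral ((hg.comp (hXmeas 0)).aestronglyMeasurable)
    ((hg.comp (hXmeas 1)).aestronglyMeasurable), hident10, sq]

variable [IsProbabilityMeasure P]

include hXmeas hindep hident in
lemma identDistrib_pair {i j k l : ℕ} (hij : i ≠ j) (hkl : k ≠ l) :
    IdentDistrib (fun ω => (X i ω, X j ω)) (fun ω => (X k ω, X l ω)) P P where
  aemeasurable_fst := ((hXmeas i).prodMk (hXmeas j)).aemeasurable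
  aemeasurable_snd := ((hXmeas k).prodMk (hXmeas l)).aemeasurable
  map_eq := by
    rw [(indepFun_iff_map_prod_eq_prod_map_map (hXmeas i).aemeasurable
        (hXmeas j).aemeasurable).1 (hindep.indepFun hij),
      (indepFun_iff_map_prod_eq_prod_map_map (hXmeas k).aemeasurable
        (hXmeas l).aemeasurable).1 (hindep.indepFun hkl),
      (hident i k).map_eq, (hident j l).map_eq]

variable {h : ℝ → ℝ → ℝ} {C : ℝ} (hmeas : Measurable (Function.uncurry h))
  (h0 : ∀ u v, 0 ≤ h u v) (hC : ∀ u v, h u v ≤ C)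

include hXmeas hmeas in
lemma measurable_kernel_pair (i j : ℕ) : Measurable fun ω => h (X i ω) (X j ω) :=
  hmeas.comp ((hXmeas i).prodMk (hXmeas j))

include hXmeas hmeas h0 hC in
lemma memLp_kernel_pair (i j : ℕ) : MemLp (fun ω => h (X i ω) (X j ω)) 2 P :=
  .of_bound (measurable_kernel_pair hXmeas hmeas i j).aestronglyMeasurable C
    (ae_of_all _ fun ω => by rw [Real.norm_of_nonneg (h0 _ _)]; exact hC _ _)

include hXmeas hmeas h0 hC in
lemma memLp_pairSum (n : ℕ) : MemLp (pairSum h X n) 2 P :=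
  memLp_finsetSum _ fun p _ => memLp_kernel_pair hXmeas hmeas h0 hC p.1 p.2

include hXmeas hindep hident hmeas in
lemma integral_kernel_pair {i j : ℕ} (hij : i ≠ j) :
    ∫ ω, h (X i ω) (X j ω) ∂P = ∫ ω, h (X 0 ω) (X 1 ω) ∂P :=
  ((identDistrib_pair hXmeas hindep hident hij zero_ne_one).comp hmeas).integral_eq

include hXmeas hindep hident hmeas h0 hC in
lemma integral_pairSum (n : ℕ) :
    P[pairSum h X n] = #(increasingPairs n) * ∫ ω, h (X 0 ω) (X 1 ω) ∂P := by
  rw [show pairSum h X n = fun ω => ∑ p ∈ increasingPairs n, h (X p.1 ω) (X p.2 ω) from rfl,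
    integral_finsetSum _ fun p _ =>
      (memLp_kernel_pair hXmeas hmeas h0 hC p.1 p.2).integrable one_le_two,
    sum_congr rfl fun p hp =>
      integral_kernel_pair hXmeas hindep hident hmeas (mem_increasingPairs.1 hp).1.ne,
    sum_const, nsmul_eq_mul]

include hXmeas hindep hmeas h0 hC in
lemma covariance_kernel_pair_eq_zero {p q : ℕ × ℕ} (hpq : ¬ SharesIndex p q) :
    cov[fun ω => h (X p.1 ω) (X p.2 ω), fun ω => h (X q.1 ω) (X q.2 ω); P] = 0 := by
  simp only [SharesIndex, not_or] at hpq
  obtain ⟨h11, h12, h21, h22⟩ := hpq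
  exact ((hindep.indepFun_prodMk_prodMk hXmeas _ _ _ _ h11 h12 h21 h22).comp hmeas hmeas
    ).covariance_eq_zero (memLp_kernel_pair hXmeas hmeas h0 hC _ _)
    (memLp_kernel_pair hXmeas hmeas h0 hC _ _)

include hXmeas hindep hmeas h0 hC in
lemma covariance_kernel_pair_le (p q : ℕ × ℕ) :
    cov[fun ω => h (X p.1 ω) (X p.2 ω), fun ω => h (X q.1 ω) (X q.2 ω); P]
      ≤ if SharesIndex p q then C ^ 2 else 0 := by
  split_ifs with hpq
  · exact covariance_le_sq_of_bounded
      (measurable_kernel_pair hXmeas hmeas _ _).aestronglyMeasurable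
      (measurable_kernel_pair hXmeas hmeas _ _).aestronglyMeasurable
      (fun _ => h0 _ _) (fun _ => hC _ _) (fun _ => h0 _ _) (fun _ => hC _ _)
  · exact (covariance_kernel_pair_eq_zero hXmeas hindep hmeas h0 hC hpq).le

include hXmeas hindep hmeas h0 hC in
lemma variance_pairSum_le (n : ℕ) :
    Var[pairSum h X n; P] ≤ 4 * C ^ 2 * (n : ℝ) ^ 3 := by
  have hC2 : 0 ≤ C ^ 2 := sq_nonneg C
  unfold pairSum
  rw [variance_fun_sum' fun p _ => memLp_kernel_pair hXmeas hmeas h0 hC p.1 p.2]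
  calc _ ≤ ∑ p ∈ increasingPairs n, ∑ q ∈ increasingPairs n,
        if SharesIndex p q then C ^ 2 else 0 :=
          sum_le_sum fun p _ => sum_le_sum fun q _ =>
            covariance_kernel_pair_le hXmeas hindep hmeas h0 hC p q
    _ = ∑ p ∈ increasingPairs n, #((increasingPairs n).filter (SharesIndex p)) * C ^ 2 := by
        simp only [sum_ite, sum_const_zero, add_zero, sum_const, nsmul_eq_mul]
    _ ≤ ∑ _p ∈ increasingPairs n, (4 * n : ℝ) * C ^ 2 := by
        gcongr with p
        exact_mod_cast card_filter_sharesIndex_le n p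
    _ = #(increasingPairs n) * (4 * n * C ^ 2) := by rw [sum_const, nsmul_eq_mul]
    _ ≤ (n : ℝ) ^ 2 * (4 * n * C ^ 2) := by
        gcongr
        exact_mod_cast card_increasingPairs_le n
    _ = 4 * C ^ 2 * (n : ℝ) ^ 3 := by ring

include hXmeas hindep hident hmeas h0 hC in
theorem ae_tendsto_pairSum_div_sq :
    ∀ᵐ ω ∂P, Tendsto (fun n : ℕ => pairSum h X n ω / (n : ℝ) ^ 2) atTop
      (nhds ((∫ ω, h (X 0 ω) (X 1 ω) ∂P) / 2)) := by
  set Z : ℕ → Ω → ℝ := fun m ω => pairSum h X (m ^ 2) ω / (m : ℝ) ^ 4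
  have hZ (m : ℕ) : MemLp (Z m) 2 P := by
    simpa only [Z, div_eq_mul_inv] using (memLp_pairSum hXmeas hmeas h0 hC _).mul_const _
  have hvar (m : ℕ) : Var[Z m; P] ≤ 4 * C ^ 2 * (1 / (m : ℝ) ^ 2) := by
    have hpow : ((m : ℝ) ^ 2) ^ 3 * (((m : ℝ) ^ 4)⁻¹) ^ 2 = 1 / (m : ℝ) ^ 2 := by
      rcases eq_or_ne (m : ℝ) 0 with hm | hm
      · simp [hm]
      · field_simp
    simp only [Z, div_eq_mul_inv, variance_mul_const]
    calc Var[pairSum h X (m ^ 2); P] * (((m : ℝ) ^ 4)⁻¹) ^ 2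
        ≤ 4 * C ^ 2 * ((m : ℝ) ^ 2) ^ 3 * (((m : ℝ) ^ 4)⁻¹) ^ 2 := by
          gcongr
          exact_mod_cast variance_pairSum_le hXmeas hindep hmeas h0 hC (m ^ 2)
      _ = 4 * C ^ 2 * (1 / (m : ℝ) ^ 2) := by rw [mul_assoc, hpow]
  have hsum : Summable fun m => Var[Z m; P] :=
    .of_nonneg_of_le (fun m => variance_nonneg _ _) hvar
      ((Real.summable_one_div_nat_pow.2 one_lt_two).mul_left _)
  have hmean : Tendsto (fun m => P[Z m]) atTop (nhds ((∫ ω, h (X 0 ω) (X 1 ω) ∂P) / 2)) := by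
    have hcard := (tendsto_card_increasingPairs_div_sq.comp
      (tendsto_pow_atTop two_ne_zero)).mul_const (∫ ω, h (X 0 ω) (X 1 ω) ∂P)
    rw [one_div_mul_eq_div] at hcard
    refine hcard.congr fun m => ?_
    simp only [Function.comp, Z, integral_div, integral_pairSum hXmeas hindep hident hmeas h0 hC]
    push_cast
    ring
  filter_upwards [ae_tendsto_sub_integral_of_summable_variance hZ hsum] with ω hω
  refine tendsto_div_sq_of_monotone (pairSum_mono h0 ω) (pairSum_nonneg h0 · ω) ?_
  simpa [Z] using hω.add hmean

end

theorem stmt3_general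
    {Ω : Type*} [MeasurableSpace Ω] (P : Measure Ω) [IsProbabilityMeasure P]
    (X : ℕ → Ω → ℝ) (hXmeas : ∀ i, Measurable (X i))
    (hindep : iIndepFun X P)
    (hident : ∀ i j, IdentDistrib (X i) (X j) P P)
    (B : Set ℝ) (hB : MeasurableSet B)
    (fc : ℝ → ℝ → ℝ)
    (hfcmeas : Measurable fun p : ℝ × ℝ => fc p.1 p.2)
    (x : ℝ)
    -- degree functional `E_D(x)` and triangle functional `E_T(x)`
    (ED ET : ℝ)
    (hED : ED = ∫ ω, (if fc x (X 0 ω) ∈ B then (1 : ℝ) else 0) ∂P)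
    (hET : ET = ∫ ω, (if fc x (X 0 ω) ∈ B then (1 : ℝ) else 0) *
        (if fc (X 0 ω) (X 1 ω) ∈ B then (1 : ℝ) else 0) *
        (if fc (X 1 ω) x ∈ B then (1 : ℝ) else 0) ∂P)
    (hEDpos : 0 < ED) :
    ∀ᵐ ω ∂P, Tendsto (fun n : ℕ =>
        (∑ j ∈ Finset.range n, ∑ k ∈ Finset.Ioo j n,
          (if fc x (X j ω) ∈ B then (1 : ℝ) else 0) *
            (if fc (X j ω) (X k ω) ∈ B then (1 : ℝ) else 0) *
            (if fc (X k ω) x ∈ B then (1 : ℝ) else 0)) /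
        (∑ j ∈ Finset.range n, ∑ k ∈ Finset.Ioo j n,
          (if fc x (X j ω) ∈ B then (1 : ℝ) else 0) *
            (if fc x (X k ω) ∈ B then (1 : ℝ) else 0)))
      atTop (nhds (ET / ED ^ 2)) := by
  set e : ℝ → ℝ → ℝ := fun u v => if fc u v ∈ B then 1 else 0 with he
  have he_meas : Measurable (Function.uncurry e) :=
    Measurable.ite (hfcmeas hB) measurable_const measurable_const
  have he0 (u v : ℝ) : 0 ≤ e u v := by simp only [he]; split_ifs <;> norm_num
  have he1 (u v : ℝ) : e u v ≤ 1 := by simp only [he]; split_ifs <;> norm_num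
  have hT := ae_tendsto_pairSum_div_sq (h := fun u v => e x u * e u v * e v x) hXmeas hindep
    hident (by fun_prop) (fun u v => mul_nonneg (mul_nonneg (he0 _ _) (he0 _ _)) (he0 _ _))
    (fun u v => mul_le_one₀ (mul_le_one₀ (he1 _ _) (he0 _ _) (he1 _ _)) (he0 _ _) (he1 _ _))
  have hV := ae_tendsto_pairSum_div_sq (h := fun u v => e x u * e x v) hXmeas hindep
    hident (by fun_prop) (fun u v => mul_nonneg (he0 _ _) (he0 _ _))
    (fun u v => mul_le_one₀ (he1 _ _) (he0 _ _) (he1 _ _))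
  rw [← hET] at hT
  rw [integral_mul_comp_pair_eq_sq hXmeas hindep hident (g := e x) (by fun_prop), ← hED] at hV
  simp only [sum_range_sum_Ioo_eq_sum_increasingPairs]
  filter_upwards [hT, hV] with ω hTω hVω
  have hlim := hTω.div hVω (by positivity)
  rw [div_div_div_cancel_right₀ two_ne_zero] at hlim
  refine hlim.congr' ?_
  filter_upwards [eventually_ne_atTop 0] with n hn
  exact div_div_div_cancel_right₀ (by positivity) _ _

/-- SLLN for the local clustering coefficient, conditional version.
Fix `x` with `E_D(x) > 0`.  Then almost surely `T_n(x) / V_n(x)` converges to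
`E_T(x) / E_D(x)^2`. -/
theorem stmt3
    {Ω : Type*} [MeasurableSpace Ω] (P : Measure Ω) [IsProbabilityMeasure P]
    (X : ℕ → Ω → ℝ) (hXmeas : ∀ i, Measurable (X i))
    (hindep : iIndepFun X P)
    (hident : ∀ i j, IdentDistrib (X i) (X j) P P)
    (B : Set ℝ) (hB : MeasurableSet B)
    (fc : ℝ → ℝ → ℝ)
    (hfcmeas : Measurable fun p : ℝ × ℝ => fc p.1 p.2)
    (hfcsym : ∀ a b, fc a b = fc b a)
    (x : ℝ)
    -- degree functional `E_D(x)` and triangle functional `E_T(x)`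
    (ED ET : ℝ)
    (hED : ED = ∫ ω, (if fc x (X 0 ω) ∈ B then (1 : ℝ) else 0) ∂P)
    (hET : ET = ∫ ω, (if fc x (X 0 ω) ∈ B then (1 : ℝ) else 0) *
        (if fc (X 0 ω) (X 1 ω) ∈ B then (1 : ℝ) else 0) *
        (if fc (X 1 ω) x ∈ B then (1 : ℝ) else 0) ∂P)
    (hEDpos : 0 < ED) :
    ∀ᵐ ω ∂P, Tendsto (fun n : ℕ =>
        (∑ j ∈ Finset.range n, ∑ k ∈ Finset.Ioo j n,
          (if fc x (X j ω) ∈ B then (1 : ℝ) else 0) *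
            (if fc (X j ω) (X k ω) ∈ B then (1 : ℝ) else 0) *
            (if fc (X k ω) x ∈ B then (1 : ℝ) else 0)) /
        (∑ j ∈ Finset.range n, ∑ k ∈ Finset.Ioo j n,
          (if fc x (X j ω) ∈ B then (1 : ℝ) else 0) *
            (if fc x (X k ω) ∈ B then (1 : ℝ) else 0)))
      atTop (nhds (ET / ED ^ 2)) :=
  stmt3_general P X hXmeas hindep hident B hB fc hfcmeas x ED ET hED hET hEDpos
end

section
/- If D and D' are VC classes of subsets of a set M, then the classes D ∪̂ D' = {A ∪ A' : A ∈ D, A' ∈ D'} and D ∩̂ D' = {A ∩ A' : A ∈ D, A' ∈ D'} are VC classes. -/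
/-- A family `D` of subsets of `M` shatters a set `A` if every subset of `A` is a trace
`A ∩ C` for some `C ∈ D`. -/
def ShattersSet {M : Type*} (D : Set (Set M)) (A : Set M) : Prop :=
  ∀ B ⊆ A, ∃ C ∈ D, A ∩ C = B

/-- `D` is a VC class iff its VC index is finite, i.e. there is a uniform bound on the
cardinality of finite shattered sets. -/
def IsVCClass {M : Type*} (D : Set (Set M)) : Prop :=
  ∃ n : ℕ, ∀ A : Finset M, ShattersSet D ↑A → A.card ≤ n

namespace VCAux

open Finset Filter
open scoped FinsetFamily

variable {α : Type*} [DecidableEq α]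

/-- Down-compression strictly decreases the total size of a family it changes. -/
lemma sum_card_compression_lt (a : α) (𝒜 : Finset (Finset α)) (h : 𝓓 a 𝒜 ≠ 𝒜) :
    ∑ s ∈ 𝓓 a 𝒜, s.card < ∑ s ∈ 𝒜, s.card := by
  rw [Down.compression, sum_disjUnion, filter_image]
  have hinj : Set.InjOn (fun s => erase s a) ↑(𝒜.filter fun s => erase s a ∉ 𝒜) := by
    intro s hs t ht hst
    rw [mem_coe, mem_filter] at hs ht
    have hs' : a ∈ s := by
      by_contra hx
      exact hs.2 (by rw [erase_eq_of_notMem hx]; exact hs.1)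
    have ht' : a ∈ t := by
      by_contra hx
      exact ht.2 (by rw [erase_eq_of_notMem hx]; exact ht.1)
    have := congrArg (insert a) hst
    simpa [insert_erase hs', insert_erase ht'] using this
  rw [sum_image fun s hs t ht => hinj hs ht]
  have hne : (𝒜.filter fun s => erase s a ∉ 𝒜).Nonempty := by
    by_contra hx
    rw [not_nonempty_iff_eq_empty, filter_eq_empty_iff] at hx
    apply h
    ext s
    rw [Down.mem_compression]
    constructor
    · rintro (⟨h1, _⟩ | ⟨h1, h2⟩)
      · exact h1
      · exfalso
        have h3 : erase (insert a s) a ∈ 𝒜 := not_not.mp (hx h2)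
        by_cases ha : a ∈ s
        · rw [insert_eq_of_mem ha] at h2; exact h1 h2
        · rw [erase_insert ha] at h3; exact h1 h3
    · intro hs
      exact Or.inl ⟨hs, not_not.mp (hx hs)⟩
  have hlt : ∑ s ∈ 𝒜.filter (fun s => erase s a ∉ 𝒜), (erase s a).card
      < ∑ s ∈ 𝒜.filter (fun s => erase s a ∉ 𝒜), s.card := by
    apply sum_lt_sum_of_nonempty hne
    intro s hs
    rw [mem_filter] at hs
    have : a ∈ s := by
      by_contra hx
      exact hs.2 (by rw [erase_eq_of_notMem hx]; exact hs.1)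
    exact card_erase_lt_of_mem this
  calc ∑ s ∈ 𝒜.filter (fun s => erase s a ∈ 𝒜), s.card
        + ∑ s ∈ 𝒜.filter (fun s => erase s a ∉ 𝒜), (erase s a).card
      < ∑ s ∈ 𝒜.filter (fun s => erase s a ∈ 𝒜), s.card
        + ∑ s ∈ 𝒜.filter (fun s => erase s a ∉ 𝒜), s.card := by omega
    _ = ∑ s ∈ 𝒜, s.card := sum_filter_add_sum_filter_not _ _ _

/-- A family fixed by every down-compression is downward closed. -/
lemma downward_closed_of_fixed (𝒜 : Finset (Finset α)) (h : ∀ a : α, 𝓓 a 𝒜 = 𝒜) :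
    ∀ s ∈ 𝒜, ∀ t ⊆ s, t ∈ 𝒜 := by
  intro s
  induction s using Finset.strongInduction with
  | _ s ih =>
    intro hs t ht
    rcases eq_or_ssubset_of_subset ht with rfl | hss
    · exact hs
    · obtain ⟨a, has, hat⟩ := exists_of_ssubset hss
      have h1 : erase s a ∈ 𝒜 := by
        have := Down.erase_mem_compression (a := a) hs
        rwa [h a] at this
      exact ih (erase s a) (erase_ssubset has) h1 t (subset_erase.2 ⟨ht, hat⟩)

/-- **Pajor's inequality**: a family has at most as many members as shattered sets. -/
theorem pajor (𝒜 : Finset (Finset α)) : 𝒜.card ≤ 𝒜.shatterer.card := by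
  by_cases h : ∀ a : α, 𝓓 a 𝒜 = 𝒜
  · apply card_le_card
    intro s hs
    rw [mem_shatterer]
    intro t ht
    exact ⟨t, downward_closed_of_fixed 𝒜 h s hs t ht, inter_eq_right.2 ht⟩
  · push_neg at h
    obtain ⟨a, ha⟩ := h
    have hlt := sum_card_compression_lt a 𝒜 ha
    calc 𝒜.card = (𝓓 a 𝒜).card := (Down.card_compression a 𝒜).symm
      _ ≤ (𝓓 a 𝒜).shatterer.card := pajor (𝓓 a 𝒜)
      _ ≤ 𝒜.shatterer.card := card_le_card (shatterer_compress_subset_shatterer a 𝒜)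
termination_by ∑ s ∈ 𝒜, s.card

/-- Sauer–Shelah-type bound on the number of traces of a VC family on a finite set. -/
lemma trace_card_le {D : Set (Set α)} {n : ℕ}
    (hvc : ∀ s : Finset α, ShattersSet D ↑s → s.card ≤ n)
    (A : Finset α) (𝒯 : Finset (Finset α))
    (hsub : ∀ t ∈ 𝒯, t ⊆ A)
    (htr : ∀ t ∈ 𝒯, ∃ C ∈ D, (↑A : Set α) ∩ C = ↑t) :
    𝒯.card ≤ (n + 1) * (A.card + 1) ^ n := by
  have key : 𝒯.shatterer ⊆ (Iic n).biUnion (fun k => A.powersetCard k) := by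
    intro s hs
    rw [mem_shatterer] at hs
    obtain ⟨t, ht, hst⟩ := hs.exists_superset
    have hsA : s ⊆ A := hst.trans (hsub t ht)
    have hshat : ShattersSet D ↑s := by
      classical
      intro B hB
      have hb : (↑(s.filter (fun x => x ∈ B)) : Set α) = B := by
        ext x
        simp only [coe_filter, Set.mem_setOf_eq, Set.mem_sep_iff, mem_coe]
        exact ⟨fun h => h.2, fun h => ⟨hB h, h⟩⟩
      obtain ⟨u, hu, hsu⟩ := hs (filter_subset (fun x => x ∈ B) s)
      obtain ⟨C, hC, hAC⟩ := htr u hu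
      refine ⟨C, hC, ?_⟩
      have : (↑s : Set α) ∩ C = ↑s ∩ (↑A ∩ C) := by
        rw [← Set.inter_assoc, Set.inter_eq_left.2 (coe_subset.2 hsA)]
      rw [this, hAC, ← coe_inter, hsu, hb]
    have hcard : s.card ≤ n := hvc s hshat
    exact mem_biUnion.2 ⟨s.card, mem_Iic.2 hcard, mem_powersetCard.2 ⟨hsA, rfl⟩⟩
  calc 𝒯.card ≤ 𝒯.shatterer.card := pajor 𝒯
    _ ≤ ((Iic n).biUnion fun k => A.powersetCard k).card := card_le_card key
    _ ≤ ∑ k ∈ Iic n, (A.powersetCard k).card := card_biUnion_le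
    _ ≤ ∑ _k ∈ Iic n, (A.card + 1) ^ n := by
        apply sum_le_sum
        intro k hk
        rw [card_powersetCard]
        calc A.card.choose k ≤ A.card ^ k := Nat.choose_le_pow A.card k
          _ ≤ (A.card + 1) ^ k := Nat.pow_le_pow_left (Nat.le_succ _) k
          _ ≤ (A.card + 1) ^ n := Nat.pow_le_pow_right (Nat.succ_pos _) (mem_Iic.1 hk)
    _ = (n + 1) * (A.card + 1) ^ n := by rw [sum_const, Nat.card_Iic, smul_eq_mul]

/-- Polynomials grow slower than `2 ^ a`. -/
lemma poly_lt_two_pow (C d : ℕ) : ∃ N : ℕ, ∀ a : ℕ, N ≤ a → C * (a + 1) ^ d < 2 ^ a := by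
  have h := tendsto_pow_const_div_const_pow_of_one_lt d (r := (2 : ℝ)) one_lt_two
  have h2 : ∀ᶠ n : ℕ in atTop, (n : ℝ) ^ d / 2 ^ n < 1 / (C * 2 ^ d + 1) := by
    have hpos : (0 : ℝ) < 1 / (C * 2 ^ d + 1) := by positivity
    exact h.eventually (eventually_lt_nhds hpos |>.mono fun x hx => hx) |>.mono fun n hn => hn
  obtain ⟨N, hN⟩ := h2.exists_forall_of_atTop
  refine ⟨max N 1, fun a ha => ?_⟩
  have ha1 : 1 ≤ a := le_trans (le_max_right N 1) ha
  have haN : N ≤ a := le_trans (le_max_left N 1) ha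
  have key := hN a haN
  have hpow : (0 : ℝ) < 2 ^ a := by positivity
  rw [div_lt_div_iff₀ hpow (by positivity)] at key
  have cast1 : (C * (a + 1) ^ d : ℝ) ≤ (C * 2 ^ d + 1) * (a : ℝ) ^ d := by
    have : ((a : ℝ) + 1) ^ d ≤ (2 * a) ^ d := by
      apply pow_le_pow_left₀ (by positivity)
      have : (1 : ℝ) ≤ a := by exact_mod_cast ha1
      linarith
    calc (C * (a + 1) ^ d : ℝ) ≤ C * (2 * a) ^ d := by
          apply mul_le_mul_of_nonneg_left this (by positivity)
      _ = (C * 2 ^ d) * (a : ℝ) ^ d := by ring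
      _ ≤ (C * 2 ^ d + 1) * (a : ℝ) ^ d := by
          apply mul_le_mul_of_nonneg_right (by linarith) (by positivity)
  have : (C * (a + 1) ^ d : ℝ) < 2 ^ a := lt_of_le_of_lt cast1 (by linarith [key])
  exact_mod_cast this

/-- The key combinatorial step: combining two VC families by a set operation that
distributes over intersection with a fixed set yields a VC family. -/
lemma main_aux {D D' : Set (Set α)} {n m : ℕ}
    (hn : ∀ s : Finset α, ShattersSet D ↑s → s.card ≤ n)
    (hm : ∀ s : Finset α, ShattersSet D' ↑s → s.card ≤ m)
    (op : Set α → Set α → Set α) (fop : Finset α → Finset α → Finset α)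
    (hcoe : ∀ u v : Finset α, (↑(fop u v) : Set α) = op ↑u ↑v)
    (hdistrib : ∀ A C C' : Set α, A ∩ op C C' = op (A ∩ C) (A ∩ C')) :
    ∃ N : ℕ, ∀ A : Finset α, ShattersSet {S | ∃ A ∈ D, ∃ A' ∈ D', S = op A A'} ↑A →
      A.card ≤ N := by
  classical
  obtain ⟨N, hN⟩ := poly_lt_two_pow ((n + 1) * (m + 1)) (n + m)
  refine ⟨N, fun A hA => ?_⟩
  by_contra hlt
  push_neg at hlt
  have haN : N ≤ A.card := hlt.le
  set 𝒯 : Finset (Finset α) :=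
    A.powerset.filter (fun t => ∃ C ∈ D, (↑A : Set α) ∩ C = ↑t) with h𝒯
  set 𝒯' : Finset (Finset α) :=
    A.powerset.filter (fun t => ∃ C ∈ D', (↑A : Set α) ∩ C = ↑t) with h𝒯'
  have hsurj : A.powerset ⊆ (𝒯 ×ˢ 𝒯').image (fun p => fop p.1 p.2) := by
    intro b hb
    rw [mem_powerset] at hb
    obtain ⟨C, hC, hACb⟩ := hA ↑b (coe_subset.2 hb)
    obtain ⟨C₁, hC₁, C₂, hC₂, rfl⟩ := hC
    set u := A.filter (fun x => x ∈ C₁) with hu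
    set v := A.filter (fun x => x ∈ C₂) with hv
    have hcu : (↑u : Set α) = ↑A ∩ C₁ := by
      ext x; simp [hu, Set.mem_inter_iff]
    have hcv : (↑v : Set α) = ↑A ∩ C₂ := by
      ext x; simp [hv, Set.mem_inter_iff]
    have humem : u ∈ 𝒯 := by
      rw [h𝒯, mem_filter, mem_powerset]
      exact ⟨filter_subset _ _, C₁, hC₁, hcu.symm⟩
    have hvmem : v ∈ 𝒯' := by
      rw [h𝒯', mem_filter, mem_powerset]
      exact ⟨filter_subset _ _, C₂, hC₂, hcv.symm⟩
    refine mem_image.2 ⟨(u, v), mem_product.2 ⟨humem, hvmem⟩, ?_⟩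
    apply coe_injective
    rw [hcoe, hcu, hcv, ← hdistrib, hACb]
  have h1 : 2 ^ A.card ≤ 𝒯.card * 𝒯'.card := by
    calc 2 ^ A.card = A.powerset.card := (card_powerset A).symm
      _ ≤ ((𝒯 ×ˢ 𝒯').image (fun p => fop p.1 p.2)).card := card_le_card hsurj
      _ ≤ (𝒯 ×ˢ 𝒯').card := card_image_le
      _ = 𝒯.card * 𝒯'.card := card_product _ _
  have h𝒯le : 𝒯.card ≤ (n + 1) * (A.card + 1) ^ n := by
    apply trace_card_le hn A
    · intro t ht; exact mem_powerset.1 (mem_filter.1 ht).1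
    · intro t ht; exact (mem_filter.1 ht).2
  have h𝒯'le : 𝒯'.card ≤ (m + 1) * (A.card + 1) ^ m := by
    apply trace_card_le hm A
    · intro t ht; exact mem_powerset.1 (mem_filter.1 ht).1
    · intro t ht; exact (mem_filter.1 ht).2
  have h2 : 𝒯.card * 𝒯'.card ≤ (n + 1) * (m + 1) * (A.card + 1) ^ (n + m) := by
    calc 𝒯.card * 𝒯'.card
        ≤ ((n + 1) * (A.card + 1) ^ n) * ((m + 1) * (A.card + 1) ^ m) :=
          Nat.mul_le_mul h𝒯le h𝒯'le
      _ = (n + 1) * (m + 1) * (A.card + 1) ^ (n + m) := by rw [pow_add]; ring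
  exact absurd (h1.trans h2) (not_le.2 (hN A.card haN))

end VCAux

/-- If `D` and `D'` are VC classes of subsets of `M`, then the classes
`{A ∪ A'}` and `{A ∩ A'}` are VC classes. -/
theorem stmt8 {M : Type*} (D D' : Set (Set M))
    (hD : IsVCClass D) (hD' : IsVCClass D') :
    IsVCClass {S : Set M | ∃ A ∈ D, ∃ A' ∈ D', S = A ∪ A'} ∧
    IsVCClass {S : Set M | ∃ A ∈ D, ∃ A' ∈ D', S = A ∩ A'} := by
  classical
  obtain ⟨n, hn⟩ := hD
  obtain ⟨m, hm⟩ := hD'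
  constructor
  · exact VCAux.main_aux hn hm (· ∪ ·) (· ∪ ·) (fun u v => Finset.coe_union u v)
      (fun A C C' => Set.inter_union_distrib_left A C C')
  · exact VCAux.main_aux hn hm (· ∩ ·) (· ∩ ·) (fun u v => Finset.coe_inter u v)
      (fun A C C' => Set.inter_inter_distrib_left A C C')
end
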